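/- For every θ ∈ (0,π) with t = cos θ, the partial sums ∑_{l=0, l≠1}^{N} (l+1)/(3 - l(l+2)) · sin((l+1)θ)/sin θ converge as N → ∞ to (π − θ)(1 − 2t²)/(2√(1 − t²)) + t/4. -/

import Mathlib

/-!
Put `z = e^{iθ}`. By the partial fractions
`(l + 1) / (3 - l (l + 2)) = -(1/(l - 1) + 1/(l + 3)) / 2` the `l`-th term is
`-Im((1/(l - 1) + 1/(l + 3)) z^{l+1}) / (2 sin θ)`, and both halves are shifts of the series
`∑ z^k / k`. On the closed unit disc away from `1` this series converges by Dirichlet's test, and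
by Abel's limit theorem its sum is `-log (1 - z)`. Since `z² + z⁻² = 2 cos 2θ` and
`z + z⁻¹ = 2 cos θ` are real and `Im log (1 - e^{iθ}) = (θ - π) / 2`, taking imaginary parts of
the limit gives the closed form.
-/

open Filter Finset Topology
open scoped Real

namespace Complex

lemma norm_geom_sum_le {z : ℂ} (hz : ‖z‖ ≤ 1) (hz1 : z ≠ 1) (n : ℕ) :
    ‖∑ i ∈ range n, z ^ i‖ ≤ 2 / ‖z - 1‖ := by
  rw [geom_sum_eq hz1, norm_div]
  gcongr
  calc ‖z ^ n - 1‖ ≤ ‖z‖ ^ n + 1 := by simpa using norm_sub_le (z ^ n) 1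
    _ ≤ 2 := by linarith [pow_le_one₀ (n := n) (norm_nonneg z) hz]

lemma cauchySeq_sum_range_pow_div {z : ℂ} (hz : ‖z‖ ≤ 1) (hz1 : z ≠ 1) :
    CauchySeq fun N : ℕ ↦ ∑ k ∈ range N, z ^ k / k := by
  have hshift (n : ℕ) : ∑ k ∈ range (n + 1), z ^ k / k =
      z • ∑ i ∈ range n, ((i : ℝ) + 1)⁻¹ • z ^ i := by
    rw [sum_range_succ', smul_sum]
    simp [real_smul, pow_succ', div_eq_inv_mul, mul_left_comm]
  rw [← cauchySeq_shift 1, funext hshift]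
  refine (uniformContinuous_const_smul z).comp_cauchySeq ?_
  refine Antitone.cauchySeq_series_mul_of_tendsto_zero_of_bounded
    (fun a b hab ↦ ?_) ?_ (norm_geom_sum_le hz hz1)
  · gcongr
  · simpa using tendsto_one_div_add_atTop_nhds_zero_nat (𝕜 := ℝ)

lemma one_sub_mem_slitPlane {z : ℂ} (hz : ‖z‖ ≤ 1) (hz1 : z ≠ 1) : 1 - z ∈ slitPlane := by
  rw [mem_slitPlane_iff, sub_re, sub_im, one_re, one_im]
  by_cases him : z.im = 0
  · have hre : z.re ≠ 1 := fun h ↦ hz1 (ext h him)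
    left; linarith [lt_of_le_of_ne ((re_le_norm z).trans hz) hre]
  · right; simpa using him

/-- The `k = 0` term is `z ^ 0 / 0 = 0`, as in `Complex.hasSum_taylorSeries_neg_log`. -/
theorem tendsto_sum_range_pow_div {z : ℂ} (hz : ‖z‖ ≤ 1) (hz1 : z ≠ 1) :
    Tendsto (fun N : ℕ ↦ ∑ k ∈ range N, z ^ k / k) atTop (𝓝 (-log (1 - z))) := by
  obtain ⟨L, hL⟩ := cauchySeq_tendsto_of_complete (cauchySeq_sum_range_pow_div hz hz1)
  suffices L = -log (1 - z) from this ▸ hL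
  have hseries : ∀ᶠ w in (𝓝[<] (1 : ℝ)).map ofReal,
      ∑' k : ℕ, z ^ k / k * w ^ k = -log (1 - w * z) := by
    refine eventually_map.mpr ?_
    filter_upwards [Ioo_mem_nhdsLT (show (-1 : ℝ) < 1 by norm_num)] with x hx
    have hxz : ‖(x : ℂ) * z‖ < 1 := by
      rw [norm_mul, norm_real, Real.norm_eq_abs]
      exact mul_lt_one_of_nonneg_of_lt_one_left (abs_nonneg x) (abs_lt.mpr hx) hz
    rw [← (hasSum_taylorSeries_neg_log hxz).tsum_eq]
    exact tsum_congr fun k ↦ by ring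
  have hlog : Tendsto (fun w : ℂ ↦ -log (1 - w * z)) ((𝓝[<] (1 : ℝ)).map ofReal)
      (𝓝 (-log (1 - z))) := by
    have hcont : ContinuousAt (fun w : ℂ ↦ -log (1 - w * z)) 1 :=
      (ContinuousAt.clog (by fun_prop) (by simpa using one_sub_mem_slitPlane hz hz1)).neg
    simpa using hcont.tendsto.comp ((continuous_ofReal.tendsto 1).mono_left
      (map_mono nhdsWithin_le_nhds))
  exact tendsto_nhds_unique ((tendsto_tsum_powerSeries_nhdsWithin_lt hL).congr' hseries) hlog

lemma one_sub_exp_mul_I (θ : ℝ) :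
    1 - exp (θ * I) = (2 * Real.sin (θ / 2) : ℝ) * exp (((θ - π) / 2 : ℝ) * I) := by
  have h2 : exp (θ * I) = exp (θ / 2 * I) ^ 2 := by rw [← exp_nat_mul]; ring_nf
  have hπ : exp (((θ - π) / 2 : ℝ) * I) = exp (θ / 2 * I) * (-I) := by
    rw [← exp_neg_pi_div_two_mul_I, ← exp_add]; push_cast; ring_nf
  have hneg : exp (-(θ / 2) * I) = (exp (θ / 2 * I))⁻¹ := by rw [← exp_neg]; ring_nf
  rw [hπ]
  push_cast
  rw [two_sin, h2, hneg]
  linear_combination (exp (θ / 2 * I) * (exp (θ / 2 * I))⁻¹ - exp (θ / 2 * I) ^ 2) * I_sq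
    - mul_inv_cancel₀ (exp_ne_zero (θ / 2 * I))

lemma im_log_one_sub_exp_mul_I {θ : ℝ} (h0 : 0 < θ) (h2π : θ < 2 * π) :
    (log (1 - exp (θ * I))).im = (θ - π) / 2 := by
  have hsin : 0 < 2 * Real.sin (θ / 2) := by
    have := Real.sin_pos_of_pos_of_lt_pi (x := θ / 2) (by linarith) (by linarith)
    linarith
  rw [log_im, one_sub_exp_mul_I, arg_real_mul _ hsin, arg_exp_mul_I,
    toIocMod_eq_self]
  constructor <;> linarith [Real.pi_pos]

end Complex

noncomputable def greenPartialSum (z : ℂ) (N : ℕ) : ℂ :=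
  ∑ l ∈ range (N + 1), if l = 1 then 0 else (1 / ((l : ℂ) - 1) + 1 / ((l : ℂ) + 3)) * z ^ (l + 1)

lemma greenPartialSum_eq {z : ℂ} (hz : z ≠ 0) {N : ℕ} (hN : 1 ≤ N) :
    greenPartialSum z N = -z + z ^ 2 * ∑ k ∈ range N, z ^ k / k
      + z⁻¹ ^ 2 * (∑ k ∈ range (N + 4), z ^ k / k - z - z ^ 2 / 2) - z ^ 2 / 4 := by
  induction N, hN using Nat.le_induction with
  | base =>
    simp only [greenPartialSum, sum_range_succ, range_zero, sum_empty]
    norm_num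
    field_simp
    ring
  | succ n hn ih =>
    have hn0 : (n : ℂ) ≠ 0 := by exact_mod_cast (by omega : n ≠ 0)
    have hn4 : (n : ℂ) + 4 ≠ 0 := by exact_mod_cast (by omega : n + 4 ≠ 0)
    rw [greenPartialSum, sum_range_succ, ← greenPartialSum, ih, if_neg (by omega),
      sum_range_succ _ n, show n + 1 + 4 = n + 4 + 1 by rfl, sum_range_succ _ (n + 4)]
    push_cast
    rw [add_sub_cancel_right, show (n : ℂ) + 1 + 3 = n + 4 by ring]
    field_simp
    ring

lemma tendsto_greenPartialSum {z : ℂ} (hz : ‖z‖ ≤ 1) (hz0 : z ≠ 0) (hz1 : z ≠ 1) :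
    Tendsto (greenPartialSum z) atTop
      (𝓝 ((z ^ 2 + z⁻¹ ^ 2) * -Complex.log (1 - z) - (z + z⁻¹) - 1 / 2 - z ^ 2 / 4)) := by
  have hL := Complex.tendsto_sum_range_pow_div hz hz1
  have hlim := (((hL.const_mul (z ^ 2)).const_add (-z)).add
    ((((tendsto_add_atTop_iff_nat 4).mpr hL).sub_const z |>.sub_const (z ^ 2 / 2)).const_mul
      (z⁻¹ ^ 2))).sub_const (z ^ 2 / 4)
  refine (hlim.congr' ?_).trans_eq ?_
  · filter_upwards [eventually_ge_atTop 1] with N hN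
    exact (greenPartialSum_eq hz0 hN).symm
  · congr 1
    field_simp
    ring

open Complex in
lemma im_greenPartialSum_limit_exp_mul_I {θ : ℝ} (h0 : 0 < θ) (h2π : θ < 2 * π) :
    ((exp (θ * I) ^ 2 + (exp (θ * I))⁻¹ ^ 2) * -log (1 - exp (θ * I))
      - (exp (θ * I) + (exp (θ * I))⁻¹) - 1 / 2 - exp (θ * I) ^ 2 / 4).im
      = (π - θ) * Real.cos (2 * θ) - Real.sin (2 * θ) / 4 := by
  have hsq : exp (θ * I) ^ 2 = exp ((2 * θ : ℝ) * I) := by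
    rw [← exp_nat_mul]; push_cast; ring_nf
  have hcos (x : ℝ) : exp (x * I) + (exp (x * I))⁻¹ = (2 * Real.cos x : ℝ) := by
    rw [← exp_neg]; push_cast; rw [two_cos]; ring_nf
  rw [inv_pow, hsq, hcos, hcos]
  simp only [sub_im, im_ofReal_mul, neg_im, im_log_one_sub_exp_mul_I h0 h2π, ofReal_im,
    one_im, exp_ofReal_mul_I_im, div_ofNat_im]
  ring

lemma div_three_sub_mul_add_two_eq {x : ℝ} (h1 : x ≠ 1) (h3 : x ≠ -3) :
    (x + 1) / (3 - x * (x + 2)) = -(1 / (x - 1) + 1 / (x + 3)) / 2 := by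
  have h1' : x - 1 ≠ 0 := sub_ne_zero.mpr h1
  have h3' : x + 3 ≠ 0 := by contrapose! h3; linarith
  rw [show 3 - x * (x + 2) = -((x - 1) * (x + 3)) by ring]
  field_simp
  ring

open Complex in
lemma summand_eq_neg_im_div_two_sin {θ : ℝ} (hθ : Real.sin θ ≠ 0) (l : ℕ) :
    (if l = 1 then 0 else
      ((l : ℝ) + 1) / (3 - (l : ℝ) * ((l : ℝ) + 2)) * (Real.sin (((l : ℝ) + 1) * θ) / Real.sin θ))
      = -(if l = 1 then 0 else
          (1 / ((l : ℂ) - 1) + 1 / ((l : ℂ) + 3)) * exp (θ * I) ^ (l + 1)).im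
        / (2 * Real.sin θ) := by
  split_ifs with hl
  · simp
  have hpow : exp (θ * I) ^ (l + 1) = exp ((((l : ℝ) + 1) * θ : ℝ) * I) := by
    rw [← exp_nat_mul]; push_cast; ring_nf
  have hcoeff : 1 / ((l : ℂ) - 1) + 1 / ((l : ℂ) + 3) =
      (1 / ((l : ℝ) - 1) + 1 / ((l : ℝ) + 3) : ℝ) := by
    push_cast; rfl
  rw [hpow, hcoeff, im_ofReal_mul, exp_ofReal_mul_I_im,
    div_three_sub_mul_add_two_eq (by exact_mod_cast hl) (by linarith [l.cast_nonneg (α := ℝ)])]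
  field_simp

open Filter in
/-- For `θ ∈ (0,π)`, `t = cos θ`, the partial sums
`∑_{l=0, l≠1}^N (l+1)/(3 - l(l+2)) sin((l+1)θ)/sin θ` converge, as `N → ∞`, to
`(π - θ)(1 - 2t²)/(2√(1 - t²)) + t/4`. -/
theorem stmt_13 (θ : ℝ) (hθ : θ ∈ Set.Ioo 0 Real.pi) (t : ℝ) (ht : t = Real.cos θ) :
    Tendsto (fun N : ℕ => ∑ l ∈ Finset.range (N + 1),
        if l = 1 then 0 else
          ((l : ℝ) + 1) / (3 - (l : ℝ) * ((l : ℝ) + 2)) *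
            (Real.sin (((l : ℝ) + 1) * θ) / Real.sin θ))
      atTop
      (nhds ((Real.pi - θ) * (1 - 2 * t ^ 2) / (2 * Real.sqrt (1 - t ^ 2)) + t / 4)) := by
  obtain ⟨hθ0, hθπ⟩ := hθ
  have hsin : 0 < Real.sin θ := Real.sin_pos_of_pos_of_lt_pi hθ0 hθπ
  have hz1 : Complex.exp (θ * Complex.I) ≠ 1 := fun h ↦
    hsin.ne' (by rw [← Complex.exp_ofReal_mul_I_im θ, h, Complex.one_im])
  have hsums : (fun N : ℕ => ∑ l ∈ Finset.range (N + 1),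
        if l = 1 then 0 else
          ((l : ℝ) + 1) / (3 - (l : ℝ) * ((l : ℝ) + 2)) *
            (Real.sin (((l : ℝ) + 1) * θ) / Real.sin θ))
      = fun N ↦ -(greenPartialSum (Complex.exp (θ * Complex.I)) N).im / (2 * Real.sin θ) := by
    ext N
    simp only [summand_eq_neg_im_div_two_sin hsin.ne', greenPartialSum, Complex.im_sum, ← sum_div,
      ← sum_neg_distrib]
  have hvalue : -((π - θ) * Real.cos (2 * θ) - Real.sin (2 * θ) / 4) / (2 * Real.sin θ)
      = (π - θ) * (1 - 2 * t ^ 2) / (2 * Real.sqrt (1 - t ^ 2)) + t / 4 := by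
    rw [ht, ← Real.sin_eq_sqrt_one_sub_cos_sq hθ0.le hθπ.le, Real.cos_two_mul, Real.sin_two_mul]
    field_simp
    ring
  rw [hsums, ← hvalue, ← im_greenPartialSum_limit_exp_mul_I hθ0 (by linarith [Real.pi_pos])]
  exact ((Complex.continuous_im.tendsto _).comp (tendsto_greenPartialSum
    (Complex.norm_exp_ofReal_mul_I θ).le (Complex.exp_ne_zero _) hz1)).neg.div_const _
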